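/- Let A, B ∈ Λ_{ℤ,univ} = HahnSeries ℝ ℤ with B ≠ 0, and let b₀ ∈ ℤ be the leading coefficient of B (the coefficient of B at its order ν(B)). Then every coefficient of the quotient A/B, computed in the field Λ_{ℚ,univ} = HahnSeries ℝ ℚ, lies in the subring ℤ[1/b₀] of ℚ; that is, each coefficient can be written as n/b₀^k for some n ∈ ℤ and k ∈ ℕ. -/

import Mathlib

/-!
STATEMENT 1: For `A, B ∈ Λ_{ℤ,univ} = HahnSeries ℝ ℤ` with `B ≠ 0` and `b₀` the leading
coefficient of `B` (the coefficient of `B` at its order), every coefficient of the quotient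
`A/B`, computed in the field `Λ_{ℚ,univ} = HahnSeries ℝ ℚ`, lies in the subring `ℤ[1/b₀]`:
it can be written as `n / b₀^k` with `n ∈ ℤ`, `k ∈ ℕ`.
-/

noncomputable section

/-- The canonical coefficientwise embedding `Λ_{ℤ,univ} → Λ_{ℚ,univ}`. -/
def iota (x : HahnSeries ℝ ℤ) : HahnSeries ℝ ℚ := x.map (Int.castRingHom ℚ)

/-!
Over the subring `ℤ[1/b₀]` of `ℚ` the leading coefficient `b₀` of `B` becomes a unit, and a Hahn
series over a domain is a unit exactly when its leading coefficient is. So `B` is already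
invertible among Hahn series with coefficients in `ℤ[1/b₀]`, and `A / B = B⁻¹ * A` is computed
there.
-/

namespace HahnSeries

section Order

variable {Γ R S F : Type*} [Zero Γ] [LinearOrder Γ] [Zero R] [Zero S] [FunLike F R S]
  [ZeroHomClass F R S]

theorem order_map_of_injective {f : F} (hf : Function.Injective f) (x : HahnSeries Γ R) :
    (x.map f).order = x.order := by
  have coeff_map_ne_zero : ∀ g, (x.map f).coeff g ≠ 0 ↔ x.coeff g ≠ 0 := fun g => by
    rw [map_coeff, ne_eq, ne_eq, map_eq_zero_iff f hf]
  rcases eq_or_ne x 0 with rfl | hx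
  · rw [show (0 : HahnSeries Γ R).map f = 0 by ext; simp, order_zero, order_zero]
  have hfx : (x.map f).coeff x.order ≠ 0 :=
    (coeff_map_ne_zero _).mpr (coeff_order_eq_zero.not.mpr hx)
  exact le_antisymm (order_le_of_coeff_ne_zero hfx) <| order_le_of_coeff_ne_zero <|
    (coeff_map_ne_zero _).mp (coeff_order_eq_zero.not.mpr (ne_zero_of_coeff_ne_zero hfx))

theorem leadingCoeff_map_of_injective {f : F} (hf : Function.Injective f) (x : HahnSeries Γ R) :
    (x.map f).leadingCoeff = f x.leadingCoeff := by
  rw [leadingCoeff_eq, leadingCoeff_eq, order_map_of_injective hf, map_coeff]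

end Order

section Subring

variable {Γ R : Type*} [PartialOrder Γ] [Ring R]

def codRestrict (S : Subring R) (x : HahnSeries Γ R) (hx : ∀ g, x.coeff g ∈ S) :
    HahnSeries Γ S where
  coeff g := ⟨x.coeff g, hx g⟩
  isPWO_support' := x.isPWO_support.mono fun _ hg h => hg (Subtype.ext h)

@[simp]
theorem map_codRestrict (S : Subring R) (x : HahnSeries Γ R) (hx : ∀ g, x.coeff g ∈ S) :
    (x.codRestrict S hx).map S.subtype = x := by
  ext
  rfl

end Subring

variable {Γ K : Type*} [AddCommGroup Γ] [LinearOrder Γ] [IsOrderedAddMonoid Γ] [Field K]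

theorem coeff_div_mem_of_inv_leadingCoeff_mem (S : Subring K) {x y : HahnSeries Γ K}
    (hx : ∀ g, x.coeff g ∈ S) (hy : ∀ g, y.coeff g ∈ S) (hinv : y.leadingCoeff⁻¹ ∈ S) (g : Γ) :
    (x / y).coeff g ∈ S := by
  rcases eq_or_ne y 0 with rfl | hy0
  · simp [zero_mem]
  set x' := x.codRestrict S hx
  set y' := y.codRestrict S hy
  have hlead : (y'.leadingCoeff : K) = y.leadingCoeff := by
    conv_rhs => rw [← map_codRestrict S y hy]
    exact (leadingCoeff_map_of_injective (f := S.subtype) Subtype.val_injective _).symm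
  obtain ⟨u, hu⟩ : IsUnit y' := isUnit_iff.mpr <| .of_mul_eq_one ⟨_, hinv⟩ <|
    Subtype.ext (by simp [hlead, leadingCoeff_ne_zero.mpr hy0])
  have hquot : x / y = (↑u⁻¹ * x').map S.subtype := by
    have map_mul' (a b : HahnSeries Γ S) :
        (a * b).map S.subtype = a.map S.subtype * b.map S.subtype :=
      HahnSeries.map_mul (S.subtype : S →ₙ+* K)
    rw [div_eq_iff hy0]
    calc x = x'.map S.subtype := (map_codRestrict S x hx).symm
      _ = (↑u⁻¹ * x' * ↑u).map S.subtype := by rw [mul_right_comm, u.inv_mul, one_mul]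
      _ = _ := by rw [map_mul', hu, map_codRestrict]
  rw [hquot]
  exact SetLike.coe_mem _

end HahnSeries

/-- `ℤ[1/b] ⊆ ℚ`, described by `b ^ k * q ∈ ℤ` so that the definition needs no `b ≠ 0`. -/
def intAdjoinInv (b : ℤ) : Subring ℚ where
  carrier := {q | ∃ (k : ℕ) (n : ℤ), (b : ℚ) ^ k * q = n}
  zero_mem' := ⟨0, 0, by simp⟩
  one_mem' := ⟨0, 1, by simp⟩
  add_mem' := by
    rintro _ _ ⟨k, n, hn⟩ ⟨j, m, hm⟩
    exact ⟨k + j, n * b ^ j + m * b ^ k, by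
      push_cast
      linear_combination (b : ℚ) ^ j * hn + (b : ℚ) ^ k * hm⟩
  mul_mem' := by
    rintro q q' ⟨k, n, hn⟩ ⟨j, m, hm⟩
    exact ⟨k + j, n * m, by push_cast; linear_combination (m : ℚ) * hn + (b : ℚ) ^ k * q * hm⟩
  neg_mem' := by
    rintro _ ⟨k, n, hn⟩
    exact ⟨k, -n, by push_cast; linear_combination -hn⟩

theorem inv_mem_intAdjoinInv {b : ℤ} (hb : b ≠ 0) : (b : ℚ)⁻¹ ∈ intAdjoinInv b :=
  ⟨1, 1, by simp [hb]⟩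

theorem exists_eq_div_pow_of_mem_intAdjoinInv {b : ℤ} (hb : b ≠ 0) {q : ℚ}
    (hq : q ∈ intAdjoinInv b) : ∃ (n : ℤ) (k : ℕ), q = n / (b : ℚ) ^ k := by
  obtain ⟨k, n, hn⟩ := hq
  exact ⟨n, k, by rw [← hn]; field_simp⟩

theorem novikov_quotient_coeff_denominators
    (A B : HahnSeries ℝ ℤ) (hB : B ≠ 0) (b₀ : ℤ) (hb₀ : b₀ = B.coeff B.order) :
    ∀ r : ℝ, ∃ (n : ℤ) (k : ℕ),
      (iota A / iota B).coeff r = (n : ℚ) / (b₀ : ℚ) ^ k := by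
  have hb₀' : b₀ = B.leadingCoeff := hb₀.trans HahnSeries.leadingCoeff_eq.symm
  have hb₀_ne : b₀ ≠ 0 := hb₀' ▸ HahnSeries.leadingCoeff_ne_zero.mpr hB
  have hlead : (iota B).leadingCoeff = b₀ := by
    rw [iota, HahnSeries.leadingCoeff_map_of_injective (RingHom.injective_int _), hb₀']
    rfl
  have int_mem (x : HahnSeries ℝ ℤ) (g : ℝ) : (iota x).coeff g ∈ intAdjoinInv b₀ :=
    intCast_mem _ _
  intro r
  refine exists_eq_div_pow_of_mem_intAdjoinInv hb₀_ne ?_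
  exact HahnSeries.coeff_div_mem_of_inv_leadingCoeff_mem _ (int_mem A) (int_mem B)
    (hlead ▸ inv_mem_intAdjoinInv hb₀_ne) r
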